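/- Let (W,S) be a Coxeter system, J ⊆ S spherical, and w the unique maximal length element of its double coset W_J w W_J. Then W_K := { x ∈ W_J : w x w⁻¹ ∈ W_J } is the standard parabolic subgroup generated by K = { s ∈ J : wsw⁻¹ ∈ J }, and Ad(w) restricts to an isomorphism of Coxeter systems (W_K, K) → (W_{wKw⁻¹}, wKw⁻¹) (in particular it is length-preserving on W_K). -/

import Mathlib

/-!
The exchange condition comes from the permutation representation of `W` on `W × ZMod 2`: the
parity `invParity v t` of the number of occurrences of `t` in the inversion sequence of a word
for `v` depends only on `v`, satisfies the cocycle identity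
`invParity (u * v) t = invParity u (v t v⁻¹) + invParity v t`, and equals `1` exactly when `t`
is a right inversion of `v`.

If `w` is longest in `W_J w W_J`, every reflection of `W_J` is a right inversion of `w`, and the
cocycle identity gives `ℓ(w q) = ℓ w - ℓ q` and `ℓ(p w) = ℓ w - ℓ p` for `p q ∈ W_J`. Writing
`w x = (w x w⁻¹) w` both ways shows that conjugation by `w` preserves the length of `x`.
For the inclusion into `W_K`, peel the last letter `s_j` off a reduced `J`-word of `x`: `s_j` is a
right inversion of `w` but not of `w x = (w x w⁻¹) w`, so by the cocycle identity `w s_j w⁻¹` is a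
right inversion of `w x w⁻¹ ∈ W_J`. Hence it lies in `W_J`, and having length `1` it is a simple
reflection `s_j'` with `j' ∈ J`.
-/

variable {B W : Type*} [Group W] {M : CoxeterMatrix B}

namespace CoxeterSystem

open List

variable (cs : CoxeterSystem M W)

local prefix:100 "s " => cs.simple
local prefix:100 "π " => cs.wordProd
local prefix:100 "ℓ " => cs.length
local prefix:100 "lis " => cs.leftInvSeq

section SignRepresentation

variable [DecidableEq W]

/-- The generator `s i` of the permutation representation behind the exchange condition, with the
sign `±1` written additively in `ZMod 2`. -/
def signFlip (i : B) (p : W × ZMod 2) : W × ZMod 2 :=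
  (s i * p.1 * s i, p.2 + if p.1 = s i then 1 else 0)

theorem signFlip_involutive (i : B) : Function.Involutive (cs.signFlip i) := by
  rintro ⟨t, ε⟩
  have hfix : s i * t * s i = s i ↔ t = s i := by
    constructor
    · intro h
      simpa [mul_assoc] using congrArg (s i * · * s i) h
    · rintro rfl
      simp
  simp only [signFlip, Prod.mk.injEq, hfix]
  refine ⟨by simp [mul_assoc], ?_⟩
  split_ifs <;> simp [add_assoc, CharTwo.add_self_eq_zero]

def signFlipPerm (i : B) : Equiv.Perm (W × ZMod 2) := (cs.signFlip_involutive i).toPerm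

theorem prod_map_signFlipPerm_apply (ω : List B) (t : W) (ε : ZMod 2) :
    (ω.map cs.signFlipPerm).prod (t, ε)
      = (π ω * t * (π ω)⁻¹, ε + (lis ω).count (π ω * t * (π ω)⁻¹)) := by
  induction ω with
  | nil => simp [leftInvSeq]
  | cons i ω ih =>
    set t' := π ω * t * (π ω)⁻¹
    have hconj : π (i :: ω) * t * (π (i :: ω))⁻¹ = MulAut.conj (s i) t' := by
      simp [t', wordProd_cons, mul_assoc]
    rw [map_cons, prod_cons, Equiv.Perm.mul_apply, ih, hconj, leftInvSeq, count_cons,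
      count_map_of_injective _ _ (MulAut.conj (s i)).injective]
    simp [signFlipPerm, signFlip, mul_assoc, mul_eq_one_iff_eq_inv, add_assoc]

theorem prod_map_alternatingWord {G : Type*} [Monoid G] (f : B → G) (i j : B) (m : ℕ) :
    ((alternatingWord i j (2 * m)).map f).prod = (f i * f j) ^ m := by
  induction m with
  | zero => simp [alternatingWord]
  | succ m ih =>
    rw [show 2 * (m + 1) = 2 * m + 1 + 1 by ring, alternatingWord_succ', alternatingWord_succ',
      if_neg (by simp), if_pos (by simp [parity_simps])]
    rw [map_cons, map_cons, prod_cons, prod_cons, ih, pow_succ', mul_assoc]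

theorem even_count_leftInvSeq_alternatingWord_two_mul (i j : B) (t : W) :
    Even ((lis (alternatingWord i j (2 * M i j))).count t) := by
  set L := lis (alternatingWord i j (2 * M i j))
  have hlen : L.length = M i j + M i j := by simp [L]; ring
  have hperiod : L.drop (M i j) = L.take (M i j) := by
    apply ext_getElem (by simp [hlen])
    intro k h₁ h₂
    have hk : k < M i j := by simpa [hlen] using h₂
    simp only [getElem_drop, getElem_take, L]
    rw [getElem_leftInvSeq_alternatingWord cs i j _ _ (by omega),
      getElem_leftInvSeq_alternatingWord cs i j _ _ (by omega),
      prod_alternatingWord_eq_mul_pow, prod_alternatingWord_eq_mul_pow,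
      show (2 * (M i j + k) + 1) / 2 = M i j + k by omega, show (2 * k + 1) / 2 = k by omega,
      pow_add, simple_mul_simple_pow', one_mul]
    simp [parity_simps]
  rw [← take_append_drop (M i j) L, count_append, hperiod]
  exact Even.add_self _

theorem isLiftable_signFlipPerm : M.IsLiftable cs.signFlipPerm := by
  intro i j
  rw [← prod_map_alternatingWord]
  ext ⟨t, ε⟩ : 1
  have hbraid : π (alternatingWord i j (2 * M i j)) = 1 := by
    rw [prod_alternatingWord_eq_mul_pow]
    simp
  have heven := even_count_leftInvSeq_alternatingWord_two_mul cs i j t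
  rw [prod_map_signFlipPerm_apply, hbraid]
  simp [(ZMod.natCast_eq_zero_iff_even).mpr heven]

def reflRep : W →* Equiv.Perm (W × ZMod 2) := cs.lift ⟨cs.signFlipPerm, cs.isLiftable_signFlipPerm⟩

def invParity (v t : W) : ZMod 2 := (cs.reflRep v (t, 0)).2

theorem reflRep_wordProd (ω : List B) : cs.reflRep (π ω) = (ω.map cs.signFlipPerm).prod := by
  rw [wordProd, map_list_prod, map_map]
  congr 1
  exact map_congr_left fun i _ => cs.lift_apply_simple cs.isLiftable_signFlipPerm i

theorem invParity_wordProd (ω : List B) (t : W) :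
    cs.invParity (π ω) t = (lis ω).count (π ω * t * (π ω)⁻¹) := by
  simp [invParity, reflRep_wordProd, prod_map_signFlipPerm_apply]

theorem reflRep_apply (v t : W) (ε : ZMod 2) :
    cs.reflRep v (t, ε) = (v * t * v⁻¹, ε + cs.invParity v t) := by
  obtain ⟨ω, rfl⟩ := cs.wordProd_surjective v
  rw [invParity_wordProd, reflRep_wordProd, prod_map_signFlipPerm_apply]

theorem invParity_mul (u v t : W) :
    cs.invParity (u * v) t = cs.invParity u (v * t * v⁻¹) + cs.invParity v t := by
  rw [invParity, map_mul, Equiv.Perm.mul_apply, reflRep_apply cs v, reflRep_apply cs u, zero_add,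
    add_comm]

theorem invParity_one (t : W) : cs.invParity 1 t = 0 := by
  simp [invParity]

theorem invParity_simple_self (i : B) : cs.invParity (s i) (s i) = 1 := by
  simpa using cs.invParity_wordProd [i] (s i)

theorem invParity_self {t : W} (ht : cs.IsReflection t) : cs.invParity t t = 1 := by
  obtain ⟨a, i, rfl⟩ := ht
  -- split `a s_i a⁻¹` as `(a s_i) a⁻¹`; the contributions of `a` and `a⁻¹` cancel as `a a⁻¹ = 1`
  have h₁ := cs.invParity_mul (a * s i) a⁻¹ (a * s i * a⁻¹)
  have h₂ := cs.invParity_mul a (s i) (s i)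
  have h₃ := cs.invParity_mul a a⁻¹ (a * s i * a⁻¹)
  simp only [mul_inv_cancel, invParity_one, invParity_simple_self, inv_inv] at h₁ h₂ h₃
  simp only [show a⁻¹ * (a * s i * a⁻¹) * a = s i by group,
    show s i * s i * (s i)⁻¹ = s i by group] at h₁ h₂ h₃
  rw [h₁, h₂]
  linear_combination -h₃

theorem mem_leftInvSeq_of_invParity_eq_one {ω : List B} {t : W}
    (h : cs.invParity (π ω) t = 1) : π ω * t * (π ω)⁻¹ ∈ lis ω := by
  rw [invParity_wordProd] at h
  refine count_pos_iff.mp (Nat.pos_of_ne_zero fun h0 => ?_)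
  simp [h0] at h

theorem isRightInversion_of_invParity_eq_one {v t : W} (h : cs.invParity v t = 1) :
    cs.IsRightInversion v t := by
  obtain ⟨ω, hω, rfl⟩ := cs.exists_isReduced v
  have hinv := cs.isLeftInversion_of_mem_leftInvSeq hω (cs.mem_leftInvSeq_of_invParity_eq_one h)
  refine ⟨(cs.isReflection_conj_iff _ _).mp hinv.1, ?_⟩
  simpa using hinv.2

theorem isRightInversion_iff_invParity_eq_one {v t : W} :
    cs.IsRightInversion v t ↔ cs.invParity v t = 1 := by
  refine ⟨fun h => ?_, cs.isRightInversion_of_invParity_eq_one⟩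
  -- `v = (v t) t`, and `t` is not a right inversion of `v t`
  have hvt : cs.invParity (v * t) t ≠ 1 := fun h' => by
    have := (cs.isRightInversion_of_invParity_eq_one h').2
    rw [mul_assoc, h.1.mul_self, mul_one] at this
    exact lt_asymm this h.2
  have hsplit := cs.invParity_mul (v * t) t t
  rw [mul_assoc, h.1.mul_self, mul_one, one_mul, h.1.inv, invParity_self cs h.1] at hsplit
  rw [hsplit]
  revert hvt
  generalize cs.invParity (v * t) t = x
  decide +revert

end SignRepresentation

theorem isRightInversion_mul_iff {u v t : W} :
    cs.IsRightInversion (u * v) t ↔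
      Xor (cs.IsRightInversion u (v * t * v⁻¹)) (cs.IsRightInversion v t) := by
  have hZMod2 : ∀ a b : ZMod 2, a + b = 1 ↔ Xor (a = 1) (b = 1) := by decide
  classical
  simp only [isRightInversion_iff_invParity_eq_one, invParity_mul, hZMod2]

theorem exists_wordProd_mul_eq_eraseIdx {ω : List B} {t : W}
    (h : cs.IsRightInversion (π ω) t) : ∃ k < ω.length, π ω * t = π (ω.eraseIdx k) := by
  classical
  obtain ⟨k, hk, hkt⟩ := mem_iff_getElem.mp
    (cs.mem_leftInvSeq_of_invParity_eq_one (cs.isRightInversion_iff_invParity_eq_one.mp h))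
  refine ⟨k, by simpa using hk, ?_⟩
  rw [← cs.getD_leftInvSeq_mul_wordProd, getD_eq_getElem _ _ hk, hkt]
  group

section Parabolic

local notation "W[" J "]" => Subgroup.closure (cs.simple '' J)

variable {J : Set B}

theorem simple_mem_closure {j : B} (hj : j ∈ J) : s j ∈ W[J] :=
  Subgroup.subset_closure (Set.mem_image_of_mem _ hj)

theorem wordProd_mem_closure {ω : List B} (hω : ∀ i ∈ ω, i ∈ J) : π ω ∈ W[J] :=
  list_prod_mem (l := ω.map cs.simple) (by simpa using fun i hi => cs.simple_mem_closure (hω i hi))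

theorem exists_isReduced_of_mem_closure {x : W} (hx : x ∈ W[J]) :
    ∃ ω : List B, cs.IsReduced ω ∧ (∀ i ∈ ω, i ∈ J) ∧ x = π ω := by
  have step : ∀ x : W, ∀ j ∈ J, (∃ ω : List B, cs.IsReduced ω ∧ (∀ i ∈ ω, i ∈ J) ∧ x = π ω) →
      ∃ ω : List B, cs.IsReduced ω ∧ (∀ i ∈ ω, i ∈ J) ∧ x * s j = π ω := by
    rintro _ j hj ⟨ω, hω, hωJ, rfl⟩
    rcases cs.length_mul_simple (π ω) j with hup | hdown
    · refine ⟨ω ++ [j], ?_, ?_, by rw [wordProd_append, wordProd_singleton]⟩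
      · rw [IsReduced, wordProd_append, wordProd_singleton, hup, hω, length_append,
          length_singleton]
      · simpa [or_imp, forall_and] using ⟨hωJ, hj⟩
    · obtain ⟨k, hk, heq⟩ :=
        cs.exists_wordProd_mul_eq_eraseIdx (ω := ω) ⟨cs.isReflection_simple j, by omega⟩
      refine ⟨ω.eraseIdx k, ?_, fun i hi => hωJ i ((eraseIdx_sublist ω k).subset hi), heq⟩
      have hlen : ℓ (π ω) = ω.length := hω
      rw [IsReduced, ← heq, length_eraseIdx_of_lt hk]
      omega
  induction hx using Subgroup.closure_induction_right with
  | one => exact ⟨[], by simp [IsReduced], by simp, by simp⟩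
  | mul_right x _ _ hy ih =>
    obtain ⟨j, hj, rfl⟩ := hy
    exact step x j hj ih
  | mul_inv_cancel x _ _ hy ih =>
    obtain ⟨j, hj, rfl⟩ := hy
    rw [inv_simple]
    exact step x j hj ih

theorem exists_eq_simple_of_mem_closure {x : W} (hx : x ∈ W[J]) (h : ℓ x = 1) :
    ∃ j ∈ J, x = s j := by
  obtain ⟨ω, hω, hωJ, rfl⟩ := cs.exists_isReduced_of_mem_closure hx
  obtain ⟨j, rfl⟩ := List.length_eq_one_iff.mp (hω.symm.trans h)
  exact ⟨j, hωJ j (mem_singleton_self j), wordProd_singleton cs j⟩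

theorem mem_closure_of_isRightInversion {y t : W} (hy : y ∈ W[J])
    (ht : cs.IsRightInversion y t) : t ∈ W[J] := by
  obtain ⟨ω, -, hωJ, rfl⟩ := cs.exists_isReduced_of_mem_closure hy
  obtain ⟨k, -, heq⟩ := cs.exists_wordProd_mul_eq_eraseIdx ht
  rw [show t = (π ω)⁻¹ * π (ω.eraseIdx k) by rw [← heq]; group]
  exact mul_mem (inv_mem hy)
    (cs.wordProd_mem_closure fun i hi => hωJ i ((eraseIdx_sublist ω k).subset hi))

variable {w : W}

theorem isRightInversion_of_length_mul_le (hw : ∀ q ∈ W[J], ℓ (w * q) ≤ ℓ w) {t : W}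
    (ht : cs.IsReflection t) (htJ : t ∈ W[J]) : cs.IsRightInversion w t :=
  ⟨ht, (hw t htJ).lt_of_ne (ht.length_mul_left_ne w)⟩

theorem length_mul_add_length_of_length_mul_le (hw : ∀ q ∈ W[J], ℓ (w * q) ≤ ℓ w) {q : W}
    (hq : q ∈ W[J]) : ℓ (w * q) + ℓ q = ℓ w := by
  have step : ∀ x ∈ W[J], ∀ j ∈ J, ℓ (w * x) + ℓ x = ℓ w →
      ℓ (w * (x * s j)) + ℓ (x * s j) = ℓ w := by
    intro x hx j hj ih
    have hwx : cs.IsRightInversion w (x * s j * x⁻¹) :=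
      cs.isRightInversion_of_length_mul_le hw ((cs.isReflection_simple j).conj x)
        (mul_mem (mul_mem hx (cs.simple_mem_closure hj)) (inv_mem hx))
    have hflip := cs.isRightInversion_mul_iff (u := w) (v := x) (t := s j)
    simp only [hwx, xor_true, isRightInversion_simple_iff_isRightDescent, IsRightDescent] at hflip
    rw [← mul_assoc]
    rcases cs.length_mul_simple x j with h | h
    · have := hflip.mpr (by omega)
      rcases cs.length_mul_simple (w * x) j with h' | h' <;> omega
    · have := mt hflip.mp (not_not.mpr (by omega))
      rcases cs.length_mul_simple (w * x) j with h' | h' <;> omega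
  induction hq using Subgroup.closure_induction_right with
  | one => simp
  | mul_right x hx _ hy ih =>
    obtain ⟨j, hj, rfl⟩ := hy
    exact step x hx j hj ih
  | mul_inv_cancel x hx _ hy ih =>
    obtain ⟨j, hj, rfl⟩ := hy
    rw [inv_simple]
    exact step x hx j hj ih

theorem length_mul_add_length_of_length_mul_le' (hw : ∀ p ∈ W[J], ℓ (p * w) ≤ ℓ w) {p : W}
    (hp : p ∈ W[J]) : ℓ (p * w) + ℓ p = ℓ w := by
  have hw' : ∀ q ∈ W[J], ℓ (w⁻¹ * q) ≤ ℓ w⁻¹ := fun q hq => by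
    have := hw q⁻¹ (inv_mem hq)
    rwa [← cs.length_inv (q⁻¹ * w), mul_inv_rev, inv_inv, ← cs.length_inv w] at this
  have := cs.length_mul_add_length_of_length_mul_le hw' (inv_mem hp)
  rwa [← mul_inv_rev, length_inv, length_inv, length_inv] at this

theorem length_conj_of_mem_closure
    (hl : ∀ p ∈ W[J], ℓ (p * w) ≤ ℓ w) (hr : ∀ q ∈ W[J], ℓ (w * q) ≤ ℓ w)
    {x : W} (hx : x ∈ W[J]) (hy : w * x * w⁻¹ ∈ W[J]) :
    ℓ (w * x * w⁻¹) = ℓ x := by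
  have h₁ := cs.length_mul_add_length_of_length_mul_le' hl hy
  have h₂ := cs.length_mul_add_length_of_length_mul_le hr hx
  rw [inv_mul_cancel_right] at h₁
  omega

theorem conj_simple_mem_closure (hr : ∀ q ∈ W[J], ℓ (w * q) ≤ ℓ w)
    {x : W} (hx : x ∈ W[J]) (hy : w * x * w⁻¹ ∈ W[J]) {j : B}
    (hj : j ∈ J) (hdesc : ℓ (x * s j) < ℓ x) : w * s j * w⁻¹ ∈ W[J] := by
  have hwj : cs.IsRightInversion w (s j) :=
    cs.isRightInversion_of_length_mul_le hr (cs.isReflection_simple j) (cs.simple_mem_closure hj)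
  have hwx : ¬ cs.IsRightInversion (w * x) (s j) := by
    rintro ⟨-, hlt⟩
    have h₁ := cs.length_mul_add_length_of_length_mul_le hr hx
    have h₂ := cs.length_mul_add_length_of_length_mul_le hr (mul_mem hx (cs.simple_mem_closure hj))
    rw [← mul_assoc] at h₂
    omega
  have hmul := cs.isRightInversion_mul_iff (u := w * x * w⁻¹) (v := w) (t := s j)
  rw [inv_mul_cancel_right] at hmul
  refine cs.mem_closure_of_isRightInversion hy (not_not.mp fun hc => hwx (hmul.mpr ?_))
  exact Or.inr ⟨hwj, hc⟩

theorem mem_closure_of_conj_mem_closure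
    (hl : ∀ p ∈ W[J], ℓ (p * w) ≤ ℓ w) (hr : ∀ q ∈ W[J], ℓ (w * q) ≤ ℓ w)
    {x : W} (hx : x ∈ W[J]) (hy : w * x * w⁻¹ ∈ W[J]) :
    x ∈ W[{j | j ∈ J ∧ ∃ j' ∈ J, w * s j * w⁻¹ = s j'}] := by
  obtain ⟨ω, hω, hωJ, rfl⟩ := cs.exists_isReduced_of_mem_closure hx
  clear hx
  induction ω using List.reverseRecOn with
  | nil => simp
  | append_singleton φ j ih =>
    have hφ : cs.IsReduced φ := by simpa using hω.take φ.length
    have hφJ : ∀ i ∈ φ, i ∈ J := fun i hi => hωJ i (mem_append_left _ hi)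
    have hj : j ∈ J := hωJ j (by simp)
    rw [wordProd_append, wordProd_singleton] at hy ⊢
    have hdesc : ℓ (π φ * s j * s j) < ℓ (π φ * s j) := by
      have hωlen := hω
      rw [IsReduced, wordProd_append, wordProd_singleton, length_append] at hωlen
      rw [simple_mul_simple_cancel_right, hωlen, hφ]
      simp
    have ht := cs.conj_simple_mem_closure hr
      (mul_mem (cs.wordProd_mem_closure hφJ) (cs.simple_mem_closure hj)) hy hj hdesc
    obtain ⟨j', hj', hjj'⟩ := cs.exists_eq_simple_of_mem_closure ht
      (by rw [cs.length_conj_of_mem_closure hl hr (cs.simple_mem_closure hj) ht, length_simple])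
    have hφy : w * π φ * w⁻¹ ∈ W[J] := by
      have : (w * (π φ * s j) * w⁻¹) * (w * s j * w⁻¹) = w * π φ * w⁻¹ := by
        simp [mul_assoc]
      rw [← this]
      exact mul_mem hy ht
    exact mul_mem (ih hφ hφJ hφy) (Subgroup.subset_closure ⟨j, ⟨hj, j', hj', hjj'⟩, rfl⟩)

theorem mem_closure_and_conj_mem_closure {x : W}
    (hx : x ∈ W[{j | j ∈ J ∧ ∃ j' ∈ J, w * s j * w⁻¹ = s j'}]) :
    x ∈ W[J] ∧ w * x * w⁻¹ ∈ W[J] := by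
  have hle : W[{j | j ∈ J ∧ ∃ j' ∈ J, w * s j * w⁻¹ = s j'}]
      ≤ W[J] ⊓ W[J].comap (MulAut.conj w).toMonoidHom := by
    rw [Subgroup.closure_le]
    rintro _ ⟨j, ⟨hj, j', hj', hjj'⟩, rfl⟩
    exact ⟨cs.simple_mem_closure hj, by simpa [hjj'] using cs.simple_mem_closure hj'⟩
  simpa using hle hx

end Parabolic

end CoxeterSystem

theorem stmt9_general (cs : CoxeterSystem M W) (J : Set B)
    (w : W)
    (hmax : ∀ u, (∃ x ∈ Subgroup.closure (cs.simple '' J),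
        ∃ y ∈ Subgroup.closure (cs.simple '' J), u = x * w * y) →
      cs.length u ≤ cs.length w ∧ (cs.length u = cs.length w → u = w)) :
    {x : W | x ∈ Subgroup.closure (cs.simple '' J) ∧
        w * x * w⁻¹ ∈ Subgroup.closure (cs.simple '' J)}
      = ↑(Subgroup.closure (cs.simple ''
          {j | j ∈ J ∧ ∃ j' ∈ J, w * cs.simple j * w⁻¹ = cs.simple j'})) ∧
    (∀ x ∈ Subgroup.closure (cs.simple ''
        {j | j ∈ J ∧ ∃ j' ∈ J, w * cs.simple j * w⁻¹ = cs.simple j'}),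
      cs.length (w * x * w⁻¹) = cs.length x) := by
  have hl : ∀ p ∈ Subgroup.closure (cs.simple '' J), cs.length (p * w) ≤ cs.length w :=
    fun p hp => (hmax _ ⟨p, hp, 1, one_mem _, (mul_one _).symm⟩).1
  have hr : ∀ q ∈ Subgroup.closure (cs.simple '' J), cs.length (w * q) ≤ cs.length w :=
    fun q hq => (hmax _ ⟨1, one_mem _, q, hq, by rw [one_mul]⟩).1
  refine ⟨Set.ext fun x => ⟨fun ⟨hx, hy⟩ => cs.mem_closure_of_conj_mem_closure hl hr hx hy,
    cs.mem_closure_and_conj_mem_closure⟩, fun x hx => ?_⟩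
  obtain ⟨hxJ, hyJ⟩ := cs.mem_closure_and_conj_mem_closure hx
  exact cs.length_conj_of_mem_closure hl hr hxJ hyJ

/-- `W_K = {x ∈ W_J : wxw⁻¹ ∈ W_J}` is the standard parabolic subgroup
generated by `K = {s ∈ J : wsw⁻¹ ∈ J}`, and `Ad(w)` is length-preserving on `W_K`
(restricting to an isomorphism of Coxeter systems `(W_K, K) → (W_{wKw⁻¹}, wKw⁻¹)`). -/
theorem stmt9 (cs : CoxeterSystem M W) (J : Set B)
    (hsph : Finite (Subgroup.closure (cs.simple '' J)))
    (w : W)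
    (hmax : ∀ u, (∃ x ∈ Subgroup.closure (cs.simple '' J),
        ∃ y ∈ Subgroup.closure (cs.simple '' J), u = x * w * y) →
      cs.length u ≤ cs.length w ∧ (cs.length u = cs.length w → u = w)) :
    {x : W | x ∈ Subgroup.closure (cs.simple '' J) ∧
        w * x * w⁻¹ ∈ Subgroup.closure (cs.simple '' J)}
      = ↑(Subgroup.closure (cs.simple ''
          {j | j ∈ J ∧ ∃ j' ∈ J, w * cs.simple j * w⁻¹ = cs.simple j'})) ∧
    (∀ x ∈ Subgroup.closure (cs.simple ''
        {j | j ∈ J ∧ ∃ j' ∈ J, w * cs.simple j * w⁻¹ = cs.simple j'}),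
      cs.length (w * x * w⁻¹) = cs.length x) :=
  stmt9_general cs J w hmax
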